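/- Let G be a simple graph containing no induced 2P_1 + P_3, let C be a clique of G with |C| ≥ 5, and let I be an independent set disjoint from C such that every vertex of I has at most one neighbour in C and every vertex of C has at most one neighbour in I (so the edges between C and I form a matching). If |I| ≥ 4, then there are no edges between C and I. -/

import Mathlib

/-- `G` contains an induced copy of `H`. -/
def HasInducedCopy {α β : Type*} (H : SimpleGraph α) (G : SimpleGraph β) : Prop :=
  ∃ f : α ↪ β, ∀ a b : α, G.Adj (f a) (f b) ↔ H.Adj a b

/-- `2P₁ + P₃`: two isolated vertices and the path `2-3-4`. -/
def twoP1PlusP3 : SimpleGraph (Fin 5) :=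
  SimpleGraph.fromRel (fun a b => (a = 2 ∧ b = 3) ∨ (a = 3 ∧ b = 4))

theorem stmt7 {V : Type*} [Fintype V] [DecidableEq V] (G : SimpleGraph V)
    (h2p1p3 : ¬ HasInducedCopy twoP1PlusP3 G)
    (C I : Finset V) (hC : G.IsClique (C : Set V)) (hcardC : 5 ≤ C.card)
    (hI : ∀ a ∈ I, ∀ b ∈ I, a ≠ b → ¬ G.Adj a b)
    (hdisj : Disjoint C I)
    (hIC : ∀ w ∈ I, ∀ u ∈ C, ∀ u' ∈ C, G.Adj w u → G.Adj w u' → u = u')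
    (hCI : ∀ u ∈ C, ∀ w ∈ I, ∀ w' ∈ I, G.Adj u w → G.Adj u w' → w = w')
    (hcardI : 4 ≤ I.card) :
    ∀ u ∈ C, ∀ w ∈ I, ¬ G.Adj u w := by
  classical
  intro u hu w hw hadj
  apply h2p1p3
  -- pick two other vertices of I
  have h3 : 1 < (I.erase w).card := by
    rw [Finset.card_erase_of_mem hw]; omega
  obtain ⟨w1, hw1, w2, hw2, hne12⟩ := Finset.one_lt_card.mp h3
  have hw1I : w1 ∈ I := Finset.mem_of_mem_erase hw1
  have hw2I : w2 ∈ I := Finset.mem_of_mem_erase hw2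
  have hw1w : w1 ≠ w := Finset.ne_of_mem_erase hw1
  have hw2w : w2 ≠ w := Finset.ne_of_mem_erase hw2
  -- pick c ∈ C, c ≠ u, nonadjacent to w1 and w2
  have hc : ∃ c ∈ C, c ≠ u ∧ ¬ G.Adj w1 c ∧ ¬ G.Adj w2 c := by
    by_contra hcon
    push_neg at hcon
    set S1 := C.filter (fun c => G.Adj w1 c) with hS1def
    set S2 := C.filter (fun c => G.Adj w2 c) with hS2def
    have hS1 : S1.card ≤ 1 := Finset.card_le_one.mpr (by
      intro a ha b hb
      simp only [hS1def, Finset.mem_filter] at ha hb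
      exact hIC w1 hw1I a ha.1 b hb.1 ha.2 hb.2)
    have hS2 : S2.card ≤ 1 := Finset.card_le_one.mpr (by
      intro a ha b hb
      simp only [hS2def, Finset.mem_filter] at ha hb
      exact hIC w2 hw2I a ha.1 b hb.1 ha.2 hb.2)
    have hsub : C ⊆ insert u (S1 ∪ S2) := by
      intro c hcC
      by_cases hcu : c = u
      · simp [hcu]
      · rcases Classical.em (G.Adj w1 c) with h1 | h1
        · simp only [Finset.mem_insert, Finset.mem_union, hS1def, Finset.mem_filter]
          exact Or.inr (Or.inl ⟨hcC, h1⟩)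
        · have h2 := hcon c hcC hcu h1
          simp only [Finset.mem_insert, Finset.mem_union, hS2def, Finset.mem_filter]
          exact Or.inr (Or.inr ⟨hcC, h2⟩)
    have hle := Finset.card_le_card hsub
    have h4 := Finset.card_insert_le u (S1 ∪ S2)
    have h5 := Finset.card_union_le S1 S2
    omega
  obtain ⟨c, hcC, hcu, hc1, hc2⟩ := hc
  -- distinctness facts
  have hdCI : ∀ x ∈ C, ∀ y ∈ I, x ≠ y := by
    intro x hx y hy hxy
    exact (Finset.disjoint_left.mp hdisj hx) (hxy ▸ hy)
  have d1 : w1 ≠ w2 := hne12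
  have d2 : w1 ≠ c := (hdCI c hcC w1 hw1I).symm
  have d3 : w1 ≠ u := (hdCI u hu w1 hw1I).symm
  have d4 : w1 ≠ w := hw1w
  have d5 : w2 ≠ c := (hdCI c hcC w2 hw2I).symm
  have d6 : w2 ≠ u := (hdCI u hu w2 hw2I).symm
  have d7 : w2 ≠ w := hw2w
  have d8 : c ≠ u := hcu
  have d9 : c ≠ w := hdCI c hcC w hw
  have d10 : u ≠ w := hdCI u hu w hw
  -- adjacency facts
  have acu : G.Adj c u := hC hcC hu hcu
  have auw : G.Adj u w := hadj
  have n1 : ¬ G.Adj w1 w2 := hI w1 hw1I w2 hw2I hne12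
  have n2 : ¬ G.Adj w1 c := hc1
  have n3 : ¬ G.Adj w1 u := fun h => hw1w (hCI u hu w hw w1 hw1I hadj h.symm).symm
  have n4 : ¬ G.Adj w1 w := hI w1 hw1I w hw hw1w
  have n5 : ¬ G.Adj w2 c := hc2
  have n6 : ¬ G.Adj w2 u := fun h => hw2w (hCI u hu w hw w2 hw2I hadj h.symm).symm
  have n7 : ¬ G.Adj w2 w := hI w2 hw2I w hw hw2w
  have n8 : ¬ G.Adj c w := fun h => hcu (hIC w hw c hcC u hu h.symm hadj.symm)
  -- build the embedding
  refine ⟨⟨![w1, w2, c, u, w], ?_⟩, ?_⟩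
  · intro a b hab
    fin_cases a <;> fin_cases b <;>
      simp only [Matrix.cons_val_zero, Matrix.cons_val_one, Matrix.head_cons,
        Matrix.cons_val_two, Matrix.tail_cons, Matrix.cons_val_three,
        Matrix.cons_val_four] at hab <;>
      first
        | rfl
        | exact absurd hab d1 | exact absurd hab.symm d1
        | exact absurd hab d2 | exact absurd hab.symm d2
        | exact absurd hab d3 | exact absurd hab.symm d3
        | exact absurd hab d4 | exact absurd hab.symm d4
        | exact absurd hab d5 | exact absurd hab.symm d5
        | exact absurd hab d6 | exact absurd hab.symm d6
        | exact absurd hab d7 | exact absurd hab.symm d7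
        | exact absurd hab d8 | exact absurd hab.symm d8
        | exact absurd hab d9 | exact absurd hab.symm d9
        | exact absurd hab d10 | exact absurd hab.symm d10
  · intro a b
    fin_cases a <;> fin_cases b <;>
      simp only [Matrix.cons_val_zero, Matrix.cons_val_one, Matrix.head_cons,
        Matrix.cons_val_two, Matrix.tail_cons, Matrix.cons_val_three,
        Matrix.cons_val_four, twoP1PlusP3, SimpleGraph.fromRel_adj] <;>
      first
        | exact iff_of_false G.irrefl (by decide)
        | exact iff_of_true acu (by decide)
        | exact iff_of_true acu.symm (by decide)
        | exact iff_of_true auw (by decide)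
        | exact iff_of_true auw.symm (by decide)
        | exact iff_of_false n1 (by decide)
        | exact iff_of_false (fun h => n1 h.symm) (by decide)
        | exact iff_of_false n2 (by decide)
        | exact iff_of_false (fun h => n2 h.symm) (by decide)
        | exact iff_of_false n3 (by decide)
        | exact iff_of_false (fun h => n3 h.symm) (by decide)
        | exact iff_of_false n4 (by decide)
        | exact iff_of_false (fun h => n4 h.symm) (by decide)
        | exact iff_of_false n5 (by decide)
        | exact iff_of_false (fun h => n5 h.symm) (by decide)
        | exact iff_of_false n6 (by decide)
        | exact iff_of_false (fun h => n6 h.symm) (by decide)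
        | exact iff_of_false n7 (by decide)
        | exact iff_of_false (fun h => n7 h.symm) (by decide)
        | exact iff_of_false n8 (by decide)
        | exact iff_of_false (fun h => n8 h.symm) (by decide)
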